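/- Fix a large constant C1 > 0 and let Ω be the event that there exist indices i, j with |x_iᵀx_j − δ_{ij}| > √(C1·log p1/p1) or |y_iᵀy_j − δ_{ij}| > √(C1·log p2/p2). Conditional on the complementary event Ω^c, there exists a constant C > 0 such that for n sufficiently large: ‖(n^{-1}D_x)^{-1} − f(2)^{-1}·I_n‖ ≤ C·log n/√n and ‖(n^{-1}D_y)^{-1} − f(2)^{-1}·I_n‖ ≤ C·log n/√n, where ‖·‖ is the operator norm. -/

import Mathlib

open MeasureTheory ProbabilityTheory Filter Set Matrix
open scoped ENNReal NNReal Topology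

noncomputable section

namespace SensorFusion

instance {m n α : Type*} [MeasurableSpace α] : MeasurableSpace (Matrix m n α) :=
  inferInstanceAs (MeasurableSpace (m → n → α))

/-- The Marchenko–Pastur law with aspect ratio `c` and scale `σ2`. -/
def mpLaw (c σ2 : ℝ) : Measure ℝ :=
  (ENNReal.ofReal (1 - c⁻¹)) • Measure.dirac 0 +
    MeasureTheory.volume.withDensity fun x =>
      ENNReal.ofReal
        (if (1 - σ2 * Real.sqrt c) ^ 2 ≤ x ∧ x ≤ (1 + σ2 * Real.sqrt c) ^ 2 then
          Real.sqrt (((1 + σ2 * Real.sqrt c) ^ 2 - x) * (x - (1 - σ2 * Real.sqrt c) ^ 2)) /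
            (2 * Real.pi * σ2 * c * x)
        else 0)

/-- Shift a measure on `ℝ` by `c` (pushforward under `x ↦ x + c`), so that `T_c μ (I) = μ (I - c)`. -/
def shiftM (c : ℝ) (μ : Measure ℝ) : Measure ℝ := μ.map fun x => x + c

/-- Stieltjes transform of a measure on `ℝ`. -/
def stP (μ : Measure ℝ) (z : ℂ) : ℂ := ∫ x : ℝ, ((x : ℂ) - z)⁻¹ ∂μ

/-- Stieltjes transform of an `n × n` real matrix: `m_H(z) = n⁻¹ tr((H - z)⁻¹)`. -/
def stM {n : ℕ} (M : Matrix (Fin n) (Fin n) ℝ) (z : ℂ) : ℂ :=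
  (n : ℂ)⁻¹ * ((M.map (fun x : ℝ => (x : ℂ)) - z • (1 : Matrix (Fin n) (Fin n) ℂ))⁻¹).trace

/-- The M-transform of a measure: `M_μ(z) = 1 - (∫ x/(x - z) dμ(x))⁻¹`. -/
def mT (μ : Measure ℝ) (z : ℂ) : ℂ := 1 - (∫ x : ℝ, (x : ℂ) / ((x : ℂ) - z) ∂μ)⁻¹

/-- `Om`, `On` are the multiplicative subordination functions of the pair `(μ, ν)`:
analytic self-maps of the upper half plane, increasing the argument, with
`M_μ(On z) = M_ν(Om z)` and `Om z * On z = z * M_μ(On z)` (the common value being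
the M-transform of the free multiplicative convolution `μ ⊠ ν`). -/
def IsMulSubord (μ ν : Measure ℝ) (Om On : ℂ → ℂ) : Prop :=
  AnalyticOnNhd ℂ Om {z : ℂ | 0 < z.im} ∧ AnalyticOnNhd ℂ On {z : ℂ | 0 < z.im} ∧
  ∀ z : ℂ, 0 < z.im →
    0 < (Om z).im ∧ 0 < (On z).im ∧ z.arg ≤ (Om z).arg ∧ z.arg ≤ (On z).arg ∧
    mT μ (On z) = mT ν (Om z) ∧ Om z * On z = z * mT μ (On z)

/-- `ρ = μ ⊠ ν` is the free multiplicative convolution of `μ` and `ν`: the probability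
measure whose M-transform is the common value `M_μ(Ω_ν(z)) = M_ν(Ω_μ(z))` of a
subordination pair for `(μ, ν)`. -/
def IsFreeMulConv (μ ν ρ : Measure ℝ) : Prop :=
  IsProbabilityMeasure ρ ∧
  ∃ Om On : ℂ → ℂ, IsMulSubord μ ν Om On ∧ ∀ z : ℂ, 0 < z.im → mT ρ z = mT μ (On z)

/-- `g j` is the `j`-th typical location of `μ` at sample size `n`:
`∫_{g j}^∞ μ(dx) = (j - 1/2)/n` for `1 ≤ j ≤ n`. -/
def IsTypLoc (μ : Measure ℝ) (n : ℕ) (g : ℕ → ℝ) : Prop :=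
  ∀ j : ℕ, 1 ≤ j → j ≤ n → (μ (Set.Ici (g j))).toReal = ((j : ℝ) - 1 / 2) / n

/-- `lam` enumerates the (real) eigenvalues of `M` (with multiplicity, as roots of the
characteristic polynomial) in decreasing order; `lam i` is the `(i+1)`-st largest eigenvalue. -/
def IsEigsDesc {n : ℕ} (M : Matrix (Fin n) (Fin n) ℝ) (lam : Fin n → ℝ) : Prop :=
  (∀ i j : Fin n, i ≤ j → lam j ≤ lam i) ∧
  Multiset.map lam Finset.univ.val = M.charpoly.roots

/-- `lam` enumerates the complex eigenvalues of `M` (with multiplicity) ordered by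
decreasing real part. -/
def IsEigsDescRe {n : ℕ} (M : Matrix (Fin n) (Fin n) ℂ) (lam : Fin n → ℂ) : Prop :=
  (∀ i j : Fin n, i ≤ j → (lam j).re ≤ (lam i).re) ∧
  Multiset.map lam Finset.univ.val = M.charpoly.roots

/-- Empirical spectral distribution `n⁻¹ ∑ δ_{d i}`. -/
def esdFun {n : ℕ} (d : Fin n → ℝ) : Measure ℝ :=
  (n : ℝ≥0∞)⁻¹ • ∑ i : Fin n, Measure.dirac (d i)

/-- Operator (spectral) norm of a real `n × n` matrix. -/
def opNorm {n : ℕ} (M : Matrix (Fin n) (Fin n) ℝ) : ℝ :=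
  ‖LinearMap.toContinuousLinearMap (Matrix.toEuclideanLin M)‖

/-- The right-most endpoint of the support of a measure on `ℝ`. -/
def rightEdge (μ : Measure ℝ) : ℝ := sInf {x : ℝ | μ (Set.Ioi x) = 0}

/-- Topological support of a measure on `ℝ`. -/
def msupport (μ : Measure ℝ) : Set ℝ := {x : ℝ | ∀ ε > 0, μ (Set.Ioo (x - ε) (x + ε)) ≠ 0}

/-- The Lévy distance between two measures on `ℝ`. -/
def levyDist (μ ν : Measure ℝ) : ℝ :=
  sInf {ε : ℝ | 0 < ε ∧ ∀ x : ℝ,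
    (μ (Set.Iic (x - ε))).toReal - ε ≤ (ν (Set.Iic x)).toReal ∧
    (ν (Set.Iic (x - ε))).toReal - ε ≤ (μ (Set.Iic x)).toReal}

/-- The kernel affinity matrix `W(i,j) = f(‖x_i - x_j‖²)`. -/
def affinity {n p : ℕ} (f : ℝ → ℝ) (x : Fin n → Fin p → ℝ) : Matrix (Fin n) (Fin n) ℝ :=
  Matrix.of fun i j => f (∑ k, (x i k - x j k) ^ 2)

/-- `ψ(i) = ‖x_i‖² - 1`. -/
def psiVec {n p : ℕ} (x : Fin n → Fin p → ℝ) (i : Fin n) : ℝ := (∑ k, x i k ^ 2) - 1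

/-- `Sh₀ = f(2) 𝟙𝟙ᵀ`. -/
def sh0 (n : ℕ) (f : ℝ → ℝ) : Matrix (Fin n) (Fin n) ℝ := Matrix.of fun _ _ => f 2

/-- `Sh₁ = f'(2)(𝟙ψᵀ + ψ𝟙ᵀ)`. -/
def sh1 {n p : ℕ} (f : ℝ → ℝ) (x : Fin n → Fin p → ℝ) : Matrix (Fin n) (Fin n) ℝ :=
  Matrix.of fun i j => deriv f 2 * (psiVec x i + psiVec x j)

/-- `Sh₂ = (f''(2)/2)(𝟙(ψ∘ψ)ᵀ + (ψ∘ψ)𝟙ᵀ + 2ψψᵀ)`. -/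
def sh2 {n p : ℕ} (f : ℝ → ℝ) (x : Fin n → Fin p → ℝ) : Matrix (Fin n) (Fin n) ℝ :=
  Matrix.of fun i j =>
    deriv (deriv f) 2 / 2 * (psiVec x i ^ 2 + psiVec x j ^ 2 + 2 * psiVec x i * psiVec x j)

/-- `W̃ = W - Sh₀ - Sh₁ - Sh₂`. -/
def wTilde {n p : ℕ} (f : ℝ → ℝ) (x : Fin n → Fin p → ℝ) : Matrix (Fin n) (Fin n) ℝ :=
  affinity f x - sh0 n f - sh1 f x - sh2 f x

/-- The Gram matrix `XᵀX` with `(i,j)` entry `x_iᵀ x_j`. -/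
def gram {n p : ℕ} (x : Fin n → Fin p → ℝ) : Matrix (Fin n) (Fin n) ℝ :=
  Matrix.of fun i j => ∑ k, x i k * x j k

/-- `ς = f(0) + 2f'(2) - f(2)`. -/
def varsigma (f : ℝ → ℝ) : ℝ := f 0 + 2 * deriv f 2 - f 2

/-- `K̆ = -2f'(2)·XᵀX + ς·I`. -/
def kBreve {n p : ℕ} (f : ℝ → ℝ) (x : Fin n → Fin p → ℝ) : Matrix (Fin n) (Fin n) ℝ :=
  (-(2 * deriv f 2)) • gram x + varsigma f • (1 : Matrix (Fin n) (Fin n) ℝ)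

/-- `K(i,j) = f(2) - 2f'(2)·x_iᵀx_j` off the diagonal and `K(i,i) = f(0)`. -/
def kMat {n p : ℕ} (f : ℝ → ℝ) (x : Fin n → Fin p → ℝ) : Matrix (Fin n) (Fin n) ℝ :=
  Matrix.of fun i j => if i = j then f 0 else f 2 - 2 * deriv f 2 * ∑ k, x i k * x j k

/-- The row-stochastic normalization `A = D⁻¹ W` where `D` is the degree matrix of `W`. -/
def rowSt {n : ℕ} (W : Matrix (Fin n) (Fin n) ℝ) : Matrix (Fin n) (Fin n) ℝ :=
  (Matrix.diagonal fun i => (∑ j, W i j)⁻¹) * W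

/-- `ν = T_ς μ_{c, -2f'(2)}`: shifted Marchenko–Pastur law. -/
def nuMeasure (f : ℝ → ℝ) (c : ℝ) : Measure ℝ := shiftM (varsigma f) (mpLaw c (-(2 * deriv f 2)))

/-- The law of `n` i.i.d. samples from `N(0, p⁻¹ I_p)`. -/
def gaussPi (n p : ℕ) : Measure (Fin n → Fin p → ℝ) :=
  Measure.pi fun _ => Measure.pi fun _ => gaussianReal 0 (p : ℝ≥0)⁻¹

/-- Membership of `z = E + iη` in the spectral parameter set `S(α, τ)`. -/
def inSpecSet (n : ℕ) (α τ E η : ℝ) : Prop :=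
  τ ≤ E ∧ E ≤ τ⁻¹ ∧ (n : ℝ) ^ (-α + τ) ≤ η ∧ η ≤ τ⁻¹

/-- `z = E + iη`. -/
def cz (E η : ℝ) : ℂ := (E : ℂ) + (η : ℂ) * Complex.I

/-- Diagonal entries of `Σ`: `γ_ν(i)` for `i ≤ min n p` and `ς` otherwise. -/
def sigmaD (n p : ℕ) (ς : ℝ) (g : ℕ → ℝ) (i : Fin n) : ℝ :=
  if (i : ℕ) + 1 ≤ min n p then g ((i : ℕ) + 1) else ς

/-- Assumption on an absolutely continuous probability measure supported on the single
interval `[a, b] ⊂ (0, ∞)`, with density positive in the interior and a power-law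
behaviour at the upper edge. -/
def EdgeRegular (μ : Measure ℝ) (a b : ℝ) : Prop :=
  IsProbabilityMeasure μ ∧ 0 < a ∧ a < b ∧
  ∃ ρ : ℝ → ℝ,
    μ = MeasureTheory.volume.withDensity (fun x => ENNReal.ofReal (ρ x)) ∧
    (∀ x, x < a → ρ x = 0) ∧ (∀ x, b < x → ρ x = 0) ∧
    (∀ x, a < x → x < b → 0 < ρ x) ∧
    ∃ C t δ : ℝ, 0 < C ∧ C ≤ 1 ∧ -1 < t ∧ t < 1 ∧ 0 < δ ∧
      ∀ x, b - δ ≤ x → x < b → C ≤ ρ x / (b - x) ^ t ∧ ρ x / (b - x) ^ t ≤ C⁻¹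

/-!
On the event in question every Gram entry is within `ε = √(C₁ log p / p)` of the identity, so
each squared distance `‖x_i - x_j‖²` with `i ≠ j` is within `4ε` of `2`, and since `f` is
Lipschitz near `2` each off-diagonal affinity is within `O(ε)` of `f(2)`. The one diagonal
entry `f(0)` moves a row average by `O(1/n)`, so every normalized degree, and then its
reciprocal, is within `O(1/n + ε)` of `f(2)`, resp. `f(2)⁻¹`. The matrix is diagonal, so its
operator norm is the largest of these deviations, and `1/n + ε = O(log n / √n)` as `p ≍ n`.
-/
open Real

section Deterministic

variable {n p : ℕ}

open scoped Matrix.Norms.L2Operator in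
lemma opNorm_diagonal_le (w : Fin n → ℝ) {r : ℝ} (hr : 0 ≤ r) (h : ∀ i, |w i| ≤ r) :
    opNorm (diagonal w) ≤ r := by
  change ‖(diagonal w : Matrix (Fin n) (Fin n) ℝ)‖ ≤ r
  rw [l2_opNorm_diagonal]
  exact (pi_norm_le_iff_of_nonneg hr).2 h

lemma abs_sum_sub_sq_sub_two_le (u v : Fin p → ℝ) {ε : ℝ}
    (hu : |∑ k, u k * u k - 1| ≤ ε) (hv : |∑ k, v k * v k - 1| ≤ ε)
    (huv : |∑ k, u k * v k| ≤ ε) :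
    |∑ k, (u k - v k) ^ 2 - 2| ≤ 4 * ε := by
  have hexpand : ∑ k, (u k - v k) ^ 2 - 2 =
      (∑ k, u k * u k - 1) + (∑ k, v k * v k - 1) - 2 * ∑ k, u k * v k := by
    simp only [sub_sq, Finset.sum_add_distrib, Finset.sum_sub_distrib, Finset.mul_sum]
    ring_nf
  rw [hexpand, abs_le]
  obtain ⟨hu₁, hu₂⟩ := abs_le.mp hu
  obtain ⟨hv₁, hv₂⟩ := abs_le.mp hv
  obtain ⟨huv₁, huv₂⟩ := abs_le.mp huv
  constructor <;> linarith

lemma affinity_apply_self (f : ℝ → ℝ) (x : Fin n → Fin p → ℝ) (i : Fin n) :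
    affinity f x i i = f 0 := by
  simp [affinity]

lemma abs_affinity_sub_le {f : ℝ → ℝ} {L : ℝ≥0} (hL : LipschitzOnWith L f (Icc 1 3))
    {ε : ℝ} (hε : 4 * ε ≤ 1) {x : Fin n → Fin p → ℝ}
    (hx : ∀ i j, |∑ k, x i k * x j k - if i = j then 1 else 0| ≤ ε) {i j : Fin n}
    (hij : i ≠ j) :
    |affinity f x i j - f 2| ≤ 4 * L * ε := by
  have hdist := abs_sum_sub_sq_sub_two_le (x i) (x j)
    (by simpa using hx i i) (by simpa using hx j j) (by simpa [hij] using hx i j)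
  obtain ⟨hlo, hhi⟩ := abs_le.mp hdist
  have hmem : ∑ k, (x i k - x j k) ^ 2 ∈ Icc (1 : ℝ) 3 := ⟨by linarith, by linarith⟩
  calc |affinity f x i j - f 2|
      ≤ L * |∑ k, (x i k - x j k) ^ 2 - 2| := by
        simpa only [affinity, of_apply, Real.dist_eq] using
          hL.dist_le_mul _ hmem 2 ⟨by norm_num, by norm_num⟩
    _ ≤ L * (4 * ε) := by gcongr
    _ = 4 * L * ε := by ring

lemma abs_rowMean_sub_le (hn : 0 < n) (W : Matrix (Fin n) (Fin n) ℝ) {c B η : ℝ}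
    (hdiag : ∀ i, |W i i - c| ≤ B) (hoff : ∀ i j, i ≠ j → |W i j - c| ≤ η) (hη : 0 ≤ η)
    (i : Fin n) :
    |(n : ℝ)⁻¹ * ∑ j, W i j - c| ≤ B / n + η := by
  have hn' : (0 : ℝ) < n := by exact_mod_cast hn
  have hentry : ∀ j, |W i j - c| ≤ (if j = i then B else 0) + η := by
    intro j
    by_cases hji : j = i
    · subst hji; simpa using (hdiag j).trans (le_add_of_nonneg_right hη)
    · simpa [hji] using hoff i j (Ne.symm hji)
  have hsum : |∑ j, (W i j - c)| ≤ B + n * η :=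
    calc |∑ j, (W i j - c)| ≤ ∑ j, |W i j - c| := Finset.abs_sum_le_sum_abs _ _
      _ ≤ ∑ j, ((if j = i then B else 0) + η) := Finset.sum_le_sum fun j _ => hentry j
      _ = B + n * η := by simp [Finset.sum_add_distrib]
  calc |(n : ℝ)⁻¹ * ∑ j, W i j - c| = (n : ℝ)⁻¹ * |∑ j, (W i j - c)| := by
        rw [← abs_of_pos (inv_pos.2 hn'), ← abs_mul, abs_of_pos (inv_pos.2 hn'),
          Finset.sum_sub_distrib, Finset.sum_const, Finset.card_fin, nsmul_eq_mul, mul_sub,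
          inv_mul_cancel_left₀ hn'.ne']
    _ ≤ (n : ℝ)⁻¹ * (B + n * η) := by gcongr
    _ = B / n + η := by field_simp

lemma abs_inv_sub_inv_le {a b δ : ℝ} (hb : 0 < b) (hab : |a - b| ≤ δ) (hδ : δ ≤ b / 2) :
    |a⁻¹ - b⁻¹| ≤ 2 / b ^ 2 * δ := by
  have ha : b / 2 ≤ a := by linarith [(abs_le.mp hab).1]
  have ha₀ : 0 < a := by linarith
  rw [inv_sub_inv ha₀.ne' hb.ne', abs_div, abs_sub_comm, abs_of_pos (mul_pos ha₀ hb),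
    div_le_iff₀ (mul_pos ha₀ hb)]
  calc |a - b| ≤ δ := hab
    _ = 2 / b ^ 2 * δ * (b / 2 * b) := by field_simp
    _ ≤ 2 / b ^ 2 * δ * (a * b) := by
        have : 0 ≤ δ := (abs_nonneg _).trans hab
        gcongr

theorem opNorm_inv_degree_sub_le {f : ℝ → ℝ} {L : ℝ≥0} (hL : LipschitzOnWith L f (Icc 1 3))
    (hf2 : 0 < f 2) (hn : 0 < n) {ε δ : ℝ} (hε : 4 * ε ≤ 1) (x : Fin n → Fin p → ℝ)
    (hx : ∀ i j, |∑ k, x i k * x j k - if i = j then 1 else 0| ≤ ε)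
    (hδ : |f 0 - f 2| / n + 4 * L * ε ≤ δ) (hδf : δ ≤ f 2 / 2) :
    opNorm (diagonal (fun i => ((n : ℝ)⁻¹ * ∑ j, affinity f x i j)⁻¹) -
        (f 2)⁻¹ • (1 : Matrix (Fin n) (Fin n) ℝ)) ≤ 2 / f 2 ^ 2 * δ := by
  have hε₀ : 0 ≤ ε := (abs_nonneg _).trans (hx ⟨0, hn⟩ ⟨0, hn⟩)
  have hδ₀ : 0 ≤ δ := le_trans (by positivity) hδ
  rw [smul_one_eq_diagonal, diagonal_sub]
  refine opNorm_diagonal_le _ (by positivity) fun i => abs_inv_sub_inv_le hf2 ?_ hδf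
  refine (abs_rowMean_sub_le hn _ (fun i => ?_) (fun i j hij => abs_affinity_sub_le hL hε hx hij)
    (by positivity) i).trans hδ
  rw [affinity_apply_self]

end Deterministic

lemma one_le_log_of_three_le {n : ℕ} (hn : 3 ≤ n) : 1 ≤ log n := by
  rw [le_log_iff_exp_le (by positivity)]
  have : (3 : ℝ) ≤ n := by exact_mod_cast hn
  linarith [exp_one_lt_d9]

lemma inv_le_log_div_sqrt {n : ℕ} (hn : 3 ≤ n) : (n : ℝ)⁻¹ ≤ log n / √n := by
  have hn₀ : (0 : ℝ) < n := by positivity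
  calc (n : ℝ)⁻¹ = 1 / √n / √n := by
        rw [div_div, mul_self_sqrt hn₀.le, one_div]
    _ ≤ log n / √n := by
        gcongr
        calc 1 / √n ≤ 1 := by
              rw [div_le_one (sqrt_pos.2 hn₀), one_le_sqrt]
              exact_mod_cast (by omega : 1 ≤ n)
          _ ≤ log n := one_le_log_of_three_le hn

lemma sqrt_log_div_le {γ C₁ : ℝ} (hγ : 0 < γ) (hC₁ : 0 ≤ C₁) {n p : ℕ} (hn : 3 ≤ n)
    (hγn : γ⁻¹ ≤ n) (hp : γ ≤ (p : ℝ) / n ∧ (p : ℝ) / n ≤ γ⁻¹) :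
    √(C₁ * log p / p) ≤ √(2 * C₁ / γ) * (log n / √n) := by
  have hn₀ : (0 : ℝ) < n := by positivity
  have hp_lo : γ * n ≤ p := (le_div_iff₀ hn₀).1 hp.1
  have hp_hi : (p : ℝ) ≤ n * n :=
    ((div_le_iff₀ hn₀).1 hp.2).trans (mul_le_mul_of_nonneg_right hγn hn₀.le)
  have hp₀ : (0 : ℝ) < p := (mul_pos hγ hn₀).trans_le hp_lo
  have hlogn := one_le_log_of_three_le hn
  have hlogp : log p ≤ 2 * log n := by
    rw [two_mul, ← log_mul hn₀.ne' hn₀.ne']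
    exact log_le_log hp₀ hp_hi
  have hlogp₀ : 0 ≤ log p := log_natCast_nonneg p
  calc √(C₁ * log p / p) ≤ √(2 * C₁ / γ * (log n ^ 2 / n)) := by
        gcongr
        calc C₁ * log p / p ≤ C₁ * (2 * log n) / (γ * n) := by gcongr
          _ = 2 * C₁ / γ * (log n / n) := by field_simp
          _ ≤ 2 * C₁ / γ * (log n ^ 2 / n) := by gcongr; nlinarith
    _ = √(2 * C₁ / γ) * (log n / √n) := by
        rw [sqrt_mul (by positivity), sqrt_div' _ hn₀.le, sqrt_sq (by linarith)]

lemma tendsto_log_div_sqrt_atTop :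
    Tendsto (fun n : ℕ => log n / √n) atTop (𝓝 0) := by
  have h := (isLittleO_log_rpow_atTop (by norm_num : (0 : ℝ) < 1 / 2)).tendsto_div_nhds_zero
  have hreal : Tendsto (fun x : ℝ => log x / √x) atTop (𝓝 0) := by
    refine h.congr' ?_
    filter_upwards [eventually_ge_atTop (0 : ℝ)] with x hx
    rw [sqrt_eq_rpow]
  exact hreal.comp tendsto_natCast_atTop_atTop

theorem opNorm_inv_degree_sub_le_log_div_sqrt {γ C₁ : ℝ} (hγ : 0 < γ) (hC₁ : 0 ≤ C₁)
    {f : ℝ → ℝ} {L : ℝ≥0} (hL : LipschitzOnWith L f (Icc 1 3)) (hf2 : 0 < f 2) {n p : ℕ}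
    (hn : 3 ≤ n) (hγn : γ⁻¹ ≤ n) (hp : γ ≤ (p : ℝ) / n ∧ (p : ℝ) / n ≤ γ⁻¹)
    (hsmall : 4 * √(2 * C₁ / γ) * (log n / √n) ≤ 1)
    (hsmall' : (|f 0 - f 2| + 4 * L * √(2 * C₁ / γ)) * (log n / √n) ≤ f 2 / 2)
    (x : Fin n → Fin p → ℝ)
    (hx : ∀ i j, |∑ k, x i k * x j k - if i = j then 1 else 0| ≤ √(C₁ * log p / p)) :
    opNorm (diagonal (fun i => ((n : ℝ)⁻¹ * ∑ j, affinity f x i j)⁻¹) -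
        (f 2)⁻¹ • (1 : Matrix (Fin n) (Fin n) ℝ)) ≤
      2 / f 2 ^ 2 * (|f 0 - f 2| + 4 * L * √(2 * C₁ / γ)) * log n / √n := by
  have hε := sqrt_log_div_le hγ hC₁ hn hγn hp
  refine (opNorm_inv_degree_sub_le hL hf2 (by omega) ?_ x hx ?_ hsmall').trans_eq (by ring)
  · calc 4 * √(C₁ * log p / p) ≤ 4 * (√(2 * C₁ / γ) * (log n / √n)) := by gcongr
      _ ≤ 1 := by linarith
  · have hinv := inv_le_log_div_sqrt hn
    calc |f 0 - f 2| / n + 4 * L * √(C₁ * log p / p)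
        ≤ |f 0 - f 2| * (log n / √n) + 4 * L * (√(2 * C₁ / γ) * (log n / √n)) := by
          rw [div_eq_mul_inv]
          gcongr
      _ = (|f 0 - f 2| + 4 * L * √(2 * C₁ / γ)) * (log n / √n) := by ring

theorem degree_matrix_concentration_general
    (γ0 : ℝ) (hγ0 : 0 < γ0)
    (p1 p2 : ℕ → ℕ)
    (hp1 : ∀ n : ℕ, 1 ≤ n → γ0 ≤ (p1 n : ℝ) / n ∧ (p1 n : ℝ) / n ≤ γ0⁻¹)
    (hp2 : ∀ n : ℕ, 1 ≤ n → γ0 ≤ (p2 n : ℝ) / n ∧ (p2 n : ℝ) / n ≤ γ0⁻¹)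
    (Ω : ℕ → Type)
    (X : ∀ n, Ω n → Fin n → Fin (p1 n) → ℝ)
    (Y : ∀ n, Ω n → Fin n → Fin (p2 n) → ℝ)
    (f : ℝ → ℝ)
    (hsmooth : ContDiff ℝ 2 f)
    (hf2 : 0 < f 2) :
    ∀ C1 : ℝ, 0 < C1 → ∃ C : ℝ, 0 < C ∧
    ∀ᶠ n : ℕ in atTop, ∀ ω : Ω n,
      (∀ i j : Fin n,
        |(∑ k, X n ω i k * X n ω j k) - (if i = j then 1 else 0)| ≤
          Real.sqrt (C1 * Real.log (p1 n) / (p1 n))) →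
      (∀ i j : Fin n,
        |(∑ k, Y n ω i k * Y n ω j k) - (if i = j then 1 else 0)| ≤
          Real.sqrt (C1 * Real.log (p2 n) / (p2 n))) →
      opNorm ((Matrix.diagonal fun i => ((n : ℝ)⁻¹ * ∑ j, affinity f (X n ω) i j)⁻¹) -
          (f 2)⁻¹ • (1 : Matrix (Fin n) (Fin n) ℝ)) ≤ C * Real.log n / Real.sqrt n ∧
      opNorm ((Matrix.diagonal fun i => ((n : ℝ)⁻¹ * ∑ j, affinity f (Y n ω) i j)⁻¹) -
          (f 2)⁻¹ • (1 : Matrix (Fin n) (Fin n) ℝ)) ≤ C * Real.log n / Real.sqrt n := by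
  intro C1 hC1
  obtain ⟨L, hL⟩ :=
    hsmooth.contDiffOn.exists_lipschitzOnWith two_ne_zero (convex_Icc (1 : ℝ) 3) isCompact_Icc
  refine ⟨2 / f 2 ^ 2 * (|f 0 - f 2| + 4 * L * √(2 * C1 / γ0)) + 1, by positivity, ?_⟩
  have hE := tendsto_log_div_sqrt_atTop
  filter_upwards [eventually_ge_atTop 3,
    tendsto_natCast_atTop_atTop.eventually_ge_atTop γ0⁻¹,
    (hE.const_mul (4 * √(2 * C1 / γ0))).eventually (eventually_le_nhds (b := 1) (by simp)),
    (hE.const_mul (|f 0 - f 2| + 4 * L * √(2 * C1 / γ0))).eventually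
      (eventually_le_nhds (b := f 2 / 2) (by simpa using half_pos hf2))]
    with n hn hγn hsmall hsmall' ω hX hY
  have hC : 2 / f 2 ^ 2 * (|f 0 - f 2| + 4 * L * √(2 * C1 / γ0)) * log n / √n ≤
      (2 / f 2 ^ 2 * (|f 0 - f 2| + 4 * L * √(2 * C1 / γ0)) + 1) * log n / √n := by
    have hlog : 0 ≤ log n := log_natCast_nonneg n
    gcongr
    linarith
  have bound := fun (p : ℕ) hp x hx =>
    (opNorm_inv_degree_sub_le_log_div_sqrt hγ0 hC1.le hL hf2 (p := p) hn hγn hp hsmall hsmall'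
      x hx).trans hC
  exact ⟨bound _ (hp1 n (by omega)) _ hX, bound _ (hp2 n (by omega)) _ hY⟩

theorem degree_matrix_concentration
    (γ0 : ℝ) (hγ0 : 0 < γ0) (hγ1 : γ0 ≤ 1)
    (p1 p2 : ℕ → ℕ)
    (hp1 : ∀ n : ℕ, 1 ≤ n → γ0 ≤ (p1 n : ℝ) / n ∧ (p1 n : ℝ) / n ≤ γ0⁻¹)
    (hp2 : ∀ n : ℕ, 1 ≤ n → γ0 ≤ (p2 n : ℝ) / n ∧ (p2 n : ℝ) / n ≤ γ0⁻¹)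
    (Ω : ℕ → Type) [∀ n, MeasurableSpace (Ω n)]
    (P : ∀ n, Measure (Ω n)) (hP : ∀ n, IsProbabilityMeasure (P n))
    (X : ∀ n, Ω n → Fin n → Fin (p1 n) → ℝ)
    (Y : ∀ n, Ω n → Fin n → Fin (p2 n) → ℝ)
    (hXY : ∀ n, (P n).map (fun ω => (X n ω, Y n ω)) =
      (gaussPi n (p1 n)).prod (gaussPi n (p2 n)))
    (f : ℝ → ℝ) (hdec : ∀ a b : ℝ, 0 ≤ a → a ≤ b → f b ≤ f a)
    (hsmooth : ContDiff ℝ 2 f)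
    (hς : 0 < varsigma f) (hf2 : 0 < f 2) :
    ∀ C1 : ℝ, 0 < C1 → ∃ C : ℝ, 0 < C ∧
    ∀ᶠ n : ℕ in atTop, ∀ ω : Ω n,
      (∀ i j : Fin n,
        |(∑ k, X n ω i k * X n ω j k) - (if i = j then 1 else 0)| ≤
          Real.sqrt (C1 * Real.log (p1 n) / (p1 n))) →
      (∀ i j : Fin n,
        |(∑ k, Y n ω i k * Y n ω j k) - (if i = j then 1 else 0)| ≤
          Real.sqrt (C1 * Real.log (p2 n) / (p2 n))) →
      opNorm ((Matrix.diagonal fun i => ((n : ℝ)⁻¹ * ∑ j, affinity f (X n ω) i j)⁻¹) -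
          (f 2)⁻¹ • (1 : Matrix (Fin n) (Fin n) ℝ)) ≤ C * Real.log n / Real.sqrt n ∧
      opNorm ((Matrix.diagonal fun i => ((n : ℝ)⁻¹ * ∑ j, affinity f (Y n ω) i j)⁻¹) -
          (f 2)⁻¹ • (1 : Matrix (Fin n) (Fin n) ℝ)) ≤ C * Real.log n / Real.sqrt n :=
  degree_matrix_concentration_general γ0 hγ0 p1 p2 hp1 hp2 Ω X Y f hsmooth hf2

end SensorFusion
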